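/- Let K_1, K_2 be fractal k-cubes of order n with digit sets D_1, D_2 and let α ∈ A_k. If there exists β ≽ α with #G_β ≥ 2, then F_α = K_1 ∩ (K_2 + α) is uncountable. -/

import Mathlib

/-!
If `g ≠ g'` both lie in `G_β`, the maps `S_g(x) = (x + g)/n` and `S_{g'}` send `F_β` into itself,
so `F_β` is a nonempty closed set invariant under the homotheties `S_g ∘ S_g`, `S_{g'} ∘ S_{g'}` of
ratio `q = n⁻² < 1/2`. Every infinite word in these two maps determines a point of `F_β`; since
`q < 1/2`, distinct words give distinct points (Cantor's function is injective), so `F_β` is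
uncountable. Along a chain `α = α₀ ⊏ ⋯ ⊏ α_p = β` each `S_d` with `d ∈ G_{α_{j-1} α_j}` injects
`F_{α_j}` into `F_{α_{j-1}}`, hence `F_α` is uncountable as well.
-/

open Set Pointwise MeasureTheory

noncomputable section

/-- Points of `ℝ^k`. -/
abbrev Pt (k : ℕ) := Fin k → ℝ

/-- A vector with all coordinates in `{0, 1, …, n−1}`. -/
def IsDigit (n : ℕ) {k : ℕ} (d : Pt k) : Prop :=
  ∀ i, ∃ m : ℕ, m < n ∧ d i = (m : ℝ)

/-- A digit set: a nonempty subset of `{0, 1, …, n−1}^k`. -/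
def IsDigitSet (n : ℕ) {k : ℕ} (D : Set (Pt k)) : Prop :=
  D.Nonempty ∧ ∀ d ∈ D, IsDigit n d

/-- `K` is the fractal `k`-cube of order `n` with digit set `D`:
a nonempty compact set with `nK = K + D`. -/
def IsFractalCube (n : ℕ) {k : ℕ} (D K : Set (Pt k)) : Prop :=
  K.Nonempty ∧ IsCompact K ∧ (n : ℝ) • K = K + D

/-- `α ∈ A_k = {−1, 0, 1}^k`. -/
def IsAk {k : ℕ} (α : Pt k) : Prop :=
  ∀ i, α i = -1 ∨ α i = 0 ∨ α i = 1

/-- The unit cube `P = [0,1]^k`. -/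
def unitCube (k : ℕ) : Set (Pt k) := {x | ∀ i, 0 ≤ x i ∧ x i ≤ 1}

/-- The face `P_α = P ∩ (P + α)`. -/
def face {k : ℕ} (α : Pt k) : Set (Pt k) :=
  unitCube k ∩ ((fun x => x + α) '' unitCube k)

/-- `α ⊑ β` : `β i = α i` whenever `α i ≠ 0`. -/
def SqLe {k : ℕ} (α β : Pt k) : Prop := ∀ i, α i ≠ 0 → β i = α i

/-- `α ⊏ β`. -/
def SqLt {k : ℕ} (α β : Pt k) : Prop := SqLe α β ∧ α ≠ β

/-- `F_α = K₁ ∩ (K₂ + α)`. -/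
def interF {k : ℕ} (K1 K2 : Set (Pt k)) (α : Pt k) : Set (Pt k) :=
  K1 ∩ ((fun x => x + α) '' K2)

/-- `G_{αβ} = D₁ ∩ (D₂ + nα − β)`. -/
def Gab (n : ℕ) {k : ℕ} (D1 D2 : Set (Pt k)) (α β : Pt k) : Set (Pt k) :=
  D1 ∩ ((fun x => x + ((n : ℝ) • α - β)) '' D2)

/-- `G_α = G_{αα} = D₁ ∩ (D₂ + (n−1)α)`. -/
def Ga (n : ℕ) {k : ℕ} (D1 D2 : Set (Pt k)) (α : Pt k) : Set (Pt k) :=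
  Gab n D1 D2 α α

/-- `β ≻ α` : there is a chain `α = α₀ ⊏ α₁ ⊏ … ⊏ α_p = β` in `A_k` (`p ≥ 1`)
with all `F_{α_j}` nonempty and all `G_{α_{j−1} α_j}` nonempty. -/
def GSucc (n : ℕ) {k : ℕ} (D1 D2 K1 K2 : Set (Pt k)) (β α : Pt k) : Prop :=
  ∃ p : ℕ, 0 < p ∧ ∃ c : ℕ → Pt k, c 0 = α ∧ c p = β ∧
    (∀ j ≤ p, IsAk (c j)) ∧
    (∀ j < p, SqLt (c j) (c (j + 1))) ∧
    (∀ j ≤ p, (interF K1 K2 (c j)).Nonempty) ∧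
    (∀ j < p, (Gab n D1 D2 (c j) (c (j + 1))).Nonempty)

/-- `β ≽ α`. -/
def GSuccEq (n : ℕ) {k : ℕ} (D1 D2 K1 K2 : Set (Pt k)) (β α : Pt k) : Prop :=
  GSucc n D1 D2 K1 K2 β α ∨ β = α

/-- The map `S_d(x) = (x + d)/n`. -/
def Sdig (n : ℕ) {k : ℕ} (d : Pt k) : Pt k → Pt k :=
  fun x => (n : ℝ)⁻¹ • (x + d)

/-- The `p`-th refinement digit set
`D^(p) = { n^{p−1} d₁ + n^{p−2} d₂ + … + d_p : (d₁, …, d_p) ∈ D^p }`. -/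
def refineD (n p : ℕ) {k : ℕ} (D : Set (Pt k)) : Set (Pt k) :=
  {x | ∃ f : Fin p → Pt k, (∀ j, f j ∈ D) ∧
    x = ∑ j : Fin p, ((n : ℝ) ^ (p - 1 - (j : ℕ))) • f j}

/-- A maximal vertex of the structure graph: `F_β ≠ ∅` and no `γ ≻ β`. -/
def IsMaxVertex (n : ℕ) {k : ℕ} (D1 D2 K1 K2 : Set (Pt k)) (β : Pt k) : Prop :=
  IsAk β ∧ (interF K1 K2 β).Nonempty ∧ ¬∃ γ, IsAk γ ∧ GSucc n D1 D2 K1 K2 γ β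

/-- The product `∏ #G_{α_j α_{j+1}}` over consecutive pairs of a chain. -/
def chainProd (n : ℕ) {k : ℕ} (D1 D2 : Set (Pt k)) : List (Pt k) → ℕ
  | [] => 1
  | [_] => 1
  | a :: b :: rest => (Gab n D1 D2 a b).ncard * chainProd n D1 D2 (b :: rest)

/-- A chain `α = α₁ ⊏ α₂ ⊏ … ⊏ α_p = β` inside `Γ_α` ending at a maximal vertex `β`. -/
def IsMaxChainFrom (n : ℕ) {k : ℕ} (D1 D2 K1 K2 : Set (Pt k)) (α : Pt k)
    (c : List (Pt k)) : Prop :=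
  c ≠ [] ∧ c.head? = some α ∧ List.Chain' SqLt c ∧
  (∀ β ∈ c, IsAk β ∧ GSuccEq n D1 D2 K1 K2 β α) ∧
  ∃ β, c.getLast? = some β ∧ IsMaxVertex n D1 D2 K1 K2 β


instance : Uncountable (ℕ → Bool) := by
  rw [← not_countable_iff, ← Cardinal.mk_le_aleph0_iff, not_le, Cardinal.mk_arrow,
    Cardinal.mk_bool, Cardinal.mk_nat, Cardinal.lift_id, Cardinal.lift_id]
  exact Cardinal.cantor _

section CantorPoint

variable {E : Type*} [AddCommGroup E] [Module ℝ E]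

/-- The point `∑ⱼ qʲ • (if σ j then a else b)`, in closed form. -/
def cantorPoint (q : ℝ) (a b : E) (σ : ℕ → Bool) : E :=
  (1 - q)⁻¹ • b + Cardinal.cantorFunction q σ • (a - b)

lemma cantorPoint_injective {q : ℝ} (hq0 : 0 < q) (hq : q < 1 / 2) {a b : E} (hab : a ≠ b) :
    Function.Injective (cantorPoint q a b) := fun _ _ h =>
  Cardinal.cantorFunction_injective hq0 hq <|
    smul_left_injective ℝ (sub_ne_zero.mpr hab) (add_left_cancel h)

lemma sum_range_geometric_smul_cond (q : ℝ) (a b : E) (σ : ℕ → Bool) (m : ℕ) :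
    ∑ j ∈ Finset.range m, q ^ j • (bif σ j then a else b) =
      (∑ j ∈ Finset.range m, q ^ j) • b +
        (∑ j ∈ Finset.range m, Cardinal.cantorFunctionAux q σ j) • (a - b) := by
  rw [Finset.sum_smul, Finset.sum_smul, ← Finset.sum_add_distrib]
  refine Finset.sum_congr rfl fun j _ => ?_
  cases h : σ j <;> simp [Cardinal.cantorFunctionAux, h, smul_sub]

variable [TopologicalSpace E] [IsTopologicalAddGroup E] [ContinuousSMul ℝ E]

lemma tendsto_sum_range_geometric_smul_cond {q : ℝ} (hq0 : 0 ≤ q) (hq1 : q < 1) (a b : E)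
    (σ : ℕ → Bool) :
    Filter.Tendsto (fun m => ∑ j ∈ Finset.range m, q ^ j • (bif σ j then a else b))
      Filter.atTop (nhds (cantorPoint q a b σ)) := by
  simp only [sum_range_geometric_smul_cond]
  exact ((hasSum_geometric_of_lt_one hq0 hq1).tendsto_sum_nat.smul_const b).add
    ((Cardinal.summable_cantor_function σ hq0 hq1).hasSum.tendsto_sum_nat.smul_const _)

lemma IsClosed.cantorPoint_mem {C : Set E} (hC : IsClosed C) (hne : C.Nonempty) {q : ℝ}
    (hq0 : 0 ≤ q) (hq1 : q < 1) {a b : E} (ha : MapsTo (fun x => q • x + a) C C)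
    (hb : MapsTo (fun x => q • x + b) C C) (σ : ℕ → Bool) : cantorPoint q a b σ ∈ C := by
  obtain ⟨x₀, hx₀⟩ := hne
  have orbit_mem : ∀ m (σ : ℕ → Bool),
      q ^ m • x₀ + ∑ j ∈ Finset.range m, q ^ j • (bif σ j then a else b) ∈ C := by
    intro m
    induction m with
    | zero => simpa using hx₀
    | succ m ih =>
      intro σ
      have step : q ^ (m + 1) • x₀ + ∑ j ∈ Finset.range (m + 1), q ^ j • (bif σ j then a else b)
          = q • (q ^ m • x₀ + ∑ j ∈ Finset.range m, q ^ j • (bif σ (j + 1) then a else b)) +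
            (bif σ 0 then a else b) := by
        rw [Finset.sum_range_succ', smul_add, Finset.smul_sum]
        simp only [smul_smul, ← pow_succ', pow_zero, one_smul]
        abel
      rw [step]
      cases σ 0
      · exact hb (ih _)
      · exact ha (ih _)
  have hpow : Filter.Tendsto (fun m : ℕ => q ^ m • x₀) Filter.atTop (nhds 0) := by
    simpa using (tendsto_pow_atTop_nhds_zero_of_lt_one hq0 hq1).smul_const x₀
  have orbit_tendsto := hpow.add (tendsto_sum_range_geometric_smul_cond hq0 hq1 a b σ)
  rw [zero_add] at orbit_tendsto
  exact hC.mem_of_tendsto orbit_tendsto (Filter.Eventually.of_forall fun m => orbit_mem m σ)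

lemma IsClosed.not_countable_of_mapsTo_homothety {C : Set E} (hC : IsClosed C) (hne : C.Nonempty)
    {q : ℝ} (hq0 : 0 < q) (hq : q < 1 / 2) {a b : E} (hab : a ≠ b)
    (ha : MapsTo (fun x => q • x + a) C C) (hb : MapsTo (fun x => q • x + b) C C) :
    ¬C.Countable := fun hCc =>
  not_countable_univ <| MapsTo.countable_of_injOn
    (fun σ _ => hC.cantorPoint_mem hne hq0.le (by linarith) ha hb σ)
    (cantorPoint_injective hq0 hq hab).injOn hCc

lemma IsClosed.inv_one_sub_smul_mem {C : Set E} (hC : IsClosed C) (hne : C.Nonempty) {q : ℝ}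
    (hq0 : 0 ≤ q) (hq1 : q < 1) {a : E} (ha : MapsTo (fun x => q • x + a) C C) :
    (1 - q)⁻¹ • a ∈ C := by
  simpa [cantorPoint] using hC.cantorPoint_mem hne hq0 hq1 ha ha (fun _ => true)

end CantorPoint

section FractalCube

variable {n k : ℕ} {D D1 D2 K K1 K2 : Set (Pt k)}

lemma Sdig_eq_homothety (n : ℕ) (d : Pt k) :
    Sdig n d = fun x => (n : ℝ)⁻¹ • x + (n : ℝ)⁻¹ • d :=
  funext fun x => smul_add _ x d

lemma Sdig_comp_self (n : ℕ) (d : Pt k) :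
    Sdig n d ∘ Sdig n d = fun x => (n : ℝ)⁻¹ ^ 2 • x + ((n : ℝ)⁻¹ ^ 2 + (n : ℝ)⁻¹) • d := by
  funext x
  simp only [Function.comp_apply, Sdig_eq_homothety, smul_add, smul_smul, add_smul, sq]
  abel

lemma Sdig_injective (hn : n ≠ 0) (d : Pt k) : Function.Injective (Sdig n d) := fun _ _ h =>
  add_right_cancel (smul_right_injective (Pt k) (inv_ne_zero (Nat.cast_ne_zero.mpr hn)) h)

lemma IsFractalCube.mapsTo_Sdig (hn : n ≠ 0) (hK : IsFractalCube n D K) {d : Pt k}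
    (hd : d ∈ D) : MapsTo (Sdig n d) K K := fun x hx => by
  have hn' : (n : ℝ) ≠ 0 := Nat.cast_ne_zero.mpr hn
  rw [← smul_mem_smul_set_iff₀ hn', Sdig, smul_inv_smul₀ hn', hK.2.2]
  exact add_mem_add hx hd

lemma isClosed_interF (hK1 : IsCompact K1) (hK2 : IsCompact K2) (α : Pt k) :
    IsClosed (interF K1 K2 α) :=
  hK1.isClosed.inter (hK2.image (continuous_add_const α)).isClosed

lemma mapsTo_Sdig_interF (hn : n ≠ 0) (hK1 : IsFractalCube n D1 K1)
    (hK2 : IsFractalCube n D2 K2) {a b d : Pt k} (hd : d ∈ Gab n D1 D2 a b) :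
    MapsTo (Sdig n d) (interF K1 K2 b) (interF K1 K2 a) := by
  obtain ⟨hd1, d2, hd2, rfl⟩ := hd
  rintro _ ⟨hx1, y, hy, rfl⟩
  refine ⟨hK1.mapsTo_Sdig hn hd1 hx1, Sdig n d2 y, hK2.mapsTo_Sdig hn hd2 hy, ?_⟩
  simp only [Sdig]
  rw [show y + b + (d2 + ((n : ℝ) • a - b)) = y + d2 + (n : ℝ) • a by abel,
    smul_add (n : ℝ)⁻¹ (y + d2), inv_smul_smul₀ (Nat.cast_ne_zero.mpr hn)]

lemma interF_countable_of_Gab_nonempty (hn : n ≠ 0) (hK1 : IsFractalCube n D1 K1)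
    (hK2 : IsFractalCube n D2 K2) {a b : Pt k} (hG : (Gab n D1 D2 a b).Nonempty)
    (ha : (interF K1 K2 a).Countable) : (interF K1 K2 b).Countable :=
  let ⟨_, hd⟩ := hG
  (mapsTo_Sdig_interF hn hK1 hK2 hd).countable_of_injOn (Sdig_injective hn _).injOn ha

lemma GSuccEq.interF_countable (hn : n ≠ 0) (hK1 : IsFractalCube n D1 K1)
    (hK2 : IsFractalCube n D2 K2) {α β : Pt k} (h : GSuccEq n D1 D2 K1 K2 β α)
    (hα : (interF K1 K2 α).Countable) : (interF K1 K2 β).Countable := by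
  rcases h with ⟨p, -, c, rfl, rfl, -, -, -, hG⟩ | rfl
  · have along_chain : ∀ j ≤ p, (interF K1 K2 (c j)).Countable := by
      intro j
      induction j with
      | zero => exact fun _ => hα
      | succ j ih =>
        exact fun hj => interF_countable_of_Gab_nonempty hn hK1 hK2 (hG j hj) (ih (by omega))
    exact along_chain p le_rfl
  · exact hα

lemma IsFractalCube.inv_sub_one_smul_mem (hn : 1 < n) (hK : IsFractalCube n D K) {e : Pt k}
    (he : e ∈ D) : ((n : ℝ) - 1)⁻¹ • e ∈ K := by
  have hn1 : (1 : ℝ) < n := by exact_mod_cast hn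
  have fixed_mem := hK.2.1.isClosed.inv_one_sub_smul_mem hK.1 (by positivity)
    (inv_lt_one_of_one_lt₀ hn1)
    (by simpa only [Sdig_eq_homothety] using hK.mapsTo_Sdig (by omega) he)
  have hc : (1 - (n : ℝ)⁻¹)⁻¹ * (n : ℝ)⁻¹ = ((n : ℝ) - 1)⁻¹ := by
    have : (n : ℝ) - 1 ≠ 0 := by linarith
    field_simp
  rwa [smul_smul, hc] at fixed_mem

/-- `g/(n-1) ∈ K₁` and `d/(n-1) ∈ K₂` are the fixed points of `S_g` and `S_d`,
and `g = d + (n-1)β`. -/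
lemma interF_nonempty_of_mem_Ga (hn : 1 < n) (hK1 : IsFractalCube n D1 K1)
    (hK2 : IsFractalCube n D2 K2) {β g : Pt k} (hg : g ∈ Ga n D1 D2 β) :
    (interF K1 K2 β).Nonempty := by
  obtain ⟨hg1, d, hd, rfl⟩ := hg
  refine ⟨_, hK1.inv_sub_one_smul_mem hn hg1, _, hK2.inv_sub_one_smul_mem hn hd, ?_⟩
  have hn1 : (n : ℝ) - 1 ≠ 0 := sub_ne_zero.mpr (by exact_mod_cast hn.ne')
  have hshift : (n : ℝ) • β - β = ((n : ℝ) - 1) • β := by rw [sub_smul, one_smul]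
  simp only
  rw [hshift, smul_add, smul_smul, inv_mul_cancel₀ hn1, one_smul]

end FractalCube

theorem interF_uncountable_general {k n : ℕ} (hn : 2 ≤ n)
    (D1 D2 K1 K2 : Set (Pt k))
    (hK1 : IsFractalCube n D1 K1) (hK2 : IsFractalCube n D2 K2)
    (α : Pt k)
    (hG : ∃ β, IsAk β ∧ GSuccEq n D1 D2 K1 K2 β α ∧ 2 ≤ (Ga n D1 D2 β).ncard) :
    ¬(interF K1 K2 α).Countable := by
  obtain ⟨β, -, hβα, hcard⟩ := hG
  have hn0 : n ≠ 0 := by omega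
  obtain ⟨g, g', hg, hg', hgg'⟩ :=
    (one_lt_ncard_iff (finite_of_ncard_pos (by omega))).mp (by omega : 1 < (Ga n D1 D2 β).ncard)
  set q : ℝ := (n : ℝ)⁻¹ ^ 2
  have hq0 : 0 < q := by positivity
  have hq : q < 1 / 2 := by
    have : (n : ℝ)⁻¹ ≤ 2⁻¹ := inv_anti₀ (by norm_num) (by exact_mod_cast hn)
    nlinarith [inv_nonneg.mpr (Nat.cast_nonneg n : (0 : ℝ) ≤ n)]
  have invariant : ∀ d ∈ Ga n D1 D2 β,
      MapsTo (fun x => q • x + (q + (n : ℝ)⁻¹) • d) (interF K1 K2 β) (interF K1 K2 β) :=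
    fun d hd => Sdig_comp_self n d ▸
      (mapsTo_Sdig_interF hn0 hK1 hK2 hd).comp (mapsTo_Sdig_interF hn0 hK1 hK2 hd)
  have hshift : (q + (n : ℝ)⁻¹) • g ≠ (q + (n : ℝ)⁻¹) • g' :=
    (smul_right_injective (Pt k) (by positivity)).ne hgg'
  exact fun hα => (isClosed_interF hK1.2.1 hK2.2.1 β).not_countable_of_mapsTo_homothety
    (interF_nonempty_of_mem_Ga (by omega) hK1 hK2 hg) hq0 hq hshift
    (invariant g hg) (invariant g' hg')
    (hβα.interF_countable hn0 hK1 hK2 hα)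

/-- if some `β ≽ α` has `#G_β ≥ 2`, then `F_α` is uncountable. -/
theorem interF_uncountable {k n : ℕ} (hk : 1 ≤ k) (hn : 2 ≤ n)
    (D1 D2 K1 K2 : Set (Pt k)) (hD1 : IsDigitSet n D1) (hD2 : IsDigitSet n D2)
    (hK1 : IsFractalCube n D1 K1) (hK2 : IsFractalCube n D2 K2)
    (α : Pt k) (hα : IsAk α)
    (hG : ∃ β, IsAk β ∧ GSuccEq n D1 D2 K1 K2 β α ∧ 2 ≤ (Ga n D1 D2 β).ncard) :
    ¬(interF K1 K2 α).Countable :=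
  interF_uncountable_general hn D1 D2 K1 K2 hK1 hK2 α hG
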